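/- arXiv:0903.1224 — 2 statements merged into one kernel-verified Lean document; each statement's English description precedes it below -/
import Mathlib

section
/- Let 𝕋 be a time scale, a,b ∈ 𝕋, a < b, g : [a,b] → ℝ strictly increasing, and f : [a,b] → ℝ strictly increasing and Riemann–Stieltjes integrable with respect to g on [a,b] ⊂ ℝ. Then ∫ₐᵇ (f|𝕋) Δ(g|𝕋) ≤ ∫ₐᵇ f dg ≤ ∫ₐᵇ (f|𝕋) ∇(g|𝕋), where the outer integrals are the Riemann–Stieltjes delta and nabla integrals on 𝕋 of the restrictions and the middle one is the classical Riemann–Stieltjes integral on [a,b]. -/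
/-!
For monotone `f` and `g` every Darboux sum is a Stieltjes sum with explicit tags: on an interval
`[u, v]` of a partition of `T` the infimum of `f` is `f u` and the supremum is `f (ρ v)` (delta)
or `f v` (nabla). So a delta lower sum on `T` is a classical lower sum and a nabla upper sum on `T`
is a classical upper sum, which gives the two inequalities.

For integrability on `T`, take a classical partition `Q` of small oscillation and replace each of
its points by the nearest points of `T` on either side. An interval of the resulting partition `P`
of `T` either has no point of `T` inside, and then contributes nothing to the delta and nabla
oscillations (`ρ v = u`, `σ u = v`), or has no point of `Q` inside, and then is an interval of the
common refinement of `P` and `Q`. Hence both oscillations of `P` are bounded by that of `Q`.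
-/

open Set Filter

noncomputable section

/-- Backward jump operator of a time scale `T`. -/
def tsRho (T : Set ℝ) (t : ℝ) : ℝ := sSup {s ∈ T | s < t}

/-- Forward jump operator of a time scale `T`. -/
def tsSigma (T : Set ℝ) (t : ℝ) : ℝ := sInf {s ∈ T | t < s}

/-- A partition `a = t₀ < t₁ < ⋯ < tₙ = b` of `[a,b] ∩ T` by points of `T`. -/
structure TSPartition (T : Set ℝ) (a b : ℝ) where
  n : ℕ
  t : ℕ → ℝ
  npos : 0 < n
  mem : ∀ j ≤ n, t j ∈ T
  first : t 0 = a
  last : t n = b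
  mono : ∀ j < n, t j < t (j + 1)

/-- Upper Darboux–Stieltjes delta sum `U_Δ(P, f, g)`. -/
def upperSumD (T : Set ℝ) (f g : ℝ → ℝ) {a b : ℝ} (P : TSPartition T a b) : ℝ :=
  ∑ j ∈ Finset.range P.n,
    sSup (f '' (Set.Icc (P.t j) (tsRho T (P.t (j + 1))) ∩ T)) * (g (P.t (j + 1)) - g (P.t j))

/-- Lower Darboux–Stieltjes delta sum `L_Δ(P, f, g)`. -/
def lowerSumD (T : Set ℝ) (f g : ℝ → ℝ) {a b : ℝ} (P : TSPartition T a b) : ℝ :=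
  ∑ j ∈ Finset.range P.n,
    sInf (f '' (Set.Icc (P.t j) (tsRho T (P.t (j + 1))) ∩ T)) * (g (P.t (j + 1)) - g (P.t j))

/-- Upper Darboux–Stieltjes nabla sum `U_∇(P, f, g)`. -/
def upperSumN (T : Set ℝ) (f g : ℝ → ℝ) {a b : ℝ} (P : TSPartition T a b) : ℝ :=
  ∑ j ∈ Finset.range P.n,
    sSup (f '' (Set.Icc (tsSigma T (P.t j)) (P.t (j + 1)) ∩ T)) * (g (P.t (j + 1)) - g (P.t j))

/-- Lower Darboux–Stieltjes nabla sum `L_∇(P, f, g)`. -/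
def lowerSumN (T : Set ℝ) (f g : ℝ → ℝ) {a b : ℝ} (P : TSPartition T a b) : ℝ :=
  ∑ j ∈ Finset.range P.n,
    sInf (f '' (Set.Icc (tsSigma T (P.t j)) (P.t (j + 1)) ∩ T)) * (g (P.t (j + 1)) - g (P.t j))

/-- Upper Darboux–Stieltjes delta integral. -/
def upperIntD (T : Set ℝ) (a b : ℝ) (f g : ℝ → ℝ) : ℝ :=
  sInf (Set.range fun P : TSPartition T a b => upperSumD T f g P)

/-- Lower Darboux–Stieltjes delta integral. -/
def lowerIntD (T : Set ℝ) (a b : ℝ) (f g : ℝ → ℝ) : ℝ :=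
  sSup (Set.range fun P : TSPartition T a b => lowerSumD T f g P)

/-- Upper Darboux–Stieltjes nabla integral. -/
def upperIntN (T : Set ℝ) (a b : ℝ) (f g : ℝ → ℝ) : ℝ :=
  sInf (Set.range fun P : TSPartition T a b => upperSumN T f g P)

/-- Lower Darboux–Stieltjes nabla integral. -/
def lowerIntN (T : Set ℝ) (a b : ℝ) (f g : ℝ → ℝ) : ℝ :=
  sSup (Set.range fun P : TSPartition T a b => lowerSumN T f g P)

/-- `f` is Riemann–Stieltjes delta integrable with respect to `g` on `[a,b] ∩ T`. -/
def RSDeltaIntegrable (T : Set ℝ) (a b : ℝ) (f g : ℝ → ℝ) : Prop :=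
  lowerIntD T a b f g = upperIntD T a b f g

/-- The Riemann–Stieltjes delta integral `∫ₐᵇ f Δg`. -/
def RSDeltaIntegral (T : Set ℝ) (a b : ℝ) (f g : ℝ → ℝ) : ℝ := upperIntD T a b f g

/-- `f` is Riemann–Stieltjes nabla integrable with respect to `g` on `[a,b] ∩ T`. -/
def RSNablaIntegrable (T : Set ℝ) (a b : ℝ) (f g : ℝ → ℝ) : Prop :=
  lowerIntN T a b f g = upperIntN T a b f g

/-- The Riemann–Stieltjes nabla integral `∫ₐᵇ f ∇g`. -/
def RSNablaIntegral (T : Set ℝ) (a b : ℝ) (f g : ℝ → ℝ) : ℝ := upperIntN T a b f g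

lemma Finset.sum_range_eq_sum_Ico_blocks {M : Type*} [AddCommMonoid M] (F : ℕ → M) {φ : ℕ → ℕ}
    {n : ℕ} (h0 : φ 0 = 0) (hφ : ∀ k < n, φ k ≤ φ (k + 1)) :
    ∑ i ∈ Finset.range (φ n), F i =
      ∑ k ∈ Finset.range n, ∑ i ∈ Finset.Ico (φ k) (φ (k + 1)), F i := by
  induction n with
  | zero => simp [h0]
  | succ n ih =>
    rw [Finset.sum_range_succ, ← ih fun k hk => hφ k (by omega),
      Finset.sum_range_add_sum_Ico _ (hφ n n.lt_succ_self)]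

section DarbouxCriterion

variable {ι : Type*} [Nonempty ι] {L U : ι → ℝ}

lemma csSup_range_eq_csInf_range_of_forall_sub_le (hLU : ∀ i j, L i ≤ U j)
    (hε : ∀ ε > 0, ∃ i, U i - L i ≤ ε) : sSup (range L) = sInf (range U) := by
  have hL : BddAbove (range L) := ⟨U (Classical.arbitrary ι), forall_mem_range.2 fun i => hLU i _⟩
  have hU : BddBelow (range U) := ⟨L (Classical.arbitrary ι), forall_mem_range.2 (hLU _)⟩
  refine le_antisymm (csSup_le (range_nonempty L) (forall_mem_range.2 fun i =>
    le_csInf (range_nonempty U) (forall_mem_range.2 (hLU i)))) ?_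
  refine le_of_forall_pos_le_add fun ε hε' => ?_
  obtain ⟨i, hi⟩ := hε ε hε'
  linarith [csInf_le hU (mem_range_self i), le_csSup hL (mem_range_self i)]

lemma exists_sub_lt_of_csSup_range_eq_csInf_range (hdir : ∀ i j, ∃ k, L i ≤ L k ∧ U k ≤ U j)
    (h : sSup (range L) = sInf (range U)) {ε : ℝ} (hε : 0 < ε) : ∃ k, U k - L k < ε := by
  obtain ⟨_, ⟨i, rfl⟩, hi⟩ :=
    exists_lt_of_lt_csSup (range_nonempty L) (sub_lt_self (sSup (range L)) (half_pos hε))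
  obtain ⟨_, ⟨j, rfl⟩, hj⟩ :=
    exists_lt_of_csInf_lt (range_nonempty U) (lt_add_of_pos_right (sInf (range U)) (half_pos hε))
  obtain ⟨k, hik, hkj⟩ := hdir i j
  exact ⟨k, by linarith⟩

end DarbouxCriterion

section JumpOperators

variable {T : Set ℝ} {u v : ℝ}

lemma tsRho_mem_Icc (hu : u ∈ T) (huv : u < v) : tsRho T v ∈ Icc u v :=
  ⟨le_csSup ⟨v, fun _ hs => hs.2.le⟩ ⟨hu, huv⟩, csSup_le ⟨u, hu, huv⟩ fun _ hs => hs.2.le⟩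

lemma tsSigma_mem_Icc (hv : v ∈ T) (huv : u < v) : tsSigma T u ∈ Icc u v :=
  ⟨le_csInf ⟨v, hv, huv⟩ fun _ hs => hs.2.le, csInf_le ⟨u, fun _ hs => hs.2.le⟩ ⟨hv, huv⟩⟩

lemma tsRho_mem (hT : IsClosed T) (hu : u ∈ T) (huv : u < v) : tsRho T v ∈ T :=
  hT.closure_subset_iff.2 (fun _ hs => hs.1)
    (csSup_mem_closure ⟨u, hu, huv⟩ ⟨v, fun _ hs => hs.2.le⟩)

lemma tsSigma_mem (hT : IsClosed T) (hv : v ∈ T) (huv : u < v) : tsSigma T u ∈ T :=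
  hT.closure_subset_iff.2 (fun _ hs => hs.1)
    (csInf_mem_closure ⟨v, hv, huv⟩ ⟨u, fun _ hs => hs.2.le⟩)

lemma tsRho_mono (hu : u ∈ T) (huv : u < v) {v' : ℝ} (hvv' : v ≤ v') :
    tsRho T v ≤ tsRho T v' :=
  csSup_le_csSup ⟨v', fun _ hs => hs.2.le⟩ ⟨u, hu, huv⟩ fun _ hs => ⟨hs.1, hs.2.trans_le hvv'⟩

lemma tsSigma_mono (hv : v ∈ T) (huv : u < v) {u' : ℝ} (hu'u : u' ≤ u) :
    tsSigma T u' ≤ tsSigma T u :=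
  csInf_le_csInf ⟨u', fun _ hs => hs.2.le⟩ ⟨v, hv, huv⟩ fun _ hs => ⟨hs.1, hu'u.trans_lt hs.2⟩

lemma tsRho_eq_of_gap (hu : u ∈ T) (huv : u < v) (hgap : Ioo u v ∩ T = ∅) : tsRho T v = u :=
  le_antisymm (csSup_le ⟨u, hu, huv⟩ fun s hs => not_lt.1 fun hus =>
      eq_empty_iff_forall_notMem.1 hgap s ⟨⟨hus, hs.2⟩, hs.1⟩)
    (tsRho_mem_Icc hu huv).1

lemma tsSigma_eq_of_gap (hv : v ∈ T) (huv : u < v) (hgap : Ioo u v ∩ T = ∅) :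
    tsSigma T u = v :=
  le_antisymm (tsSigma_mem_Icc hv huv).2
    (le_csInf ⟨v, hv, huv⟩ fun s hs => not_lt.1 fun hsv =>
      eq_empty_iff_forall_notMem.1 hgap s ⟨⟨hs.2, hsv⟩, hs.1⟩)

lemma tsRho_univ (v : ℝ) : tsRho univ v = v := by
  simp only [tsRho, mem_univ, true_and]
  exact csSup_Iio

end JumpOperators

lemma exists_gap_around {T : Set ℝ} (hT : IsClosed T) {a b x : ℝ} (ha : a ∈ T) (hb : b ∈ T)
    (hx : x ∈ Icc a b) :
    ∃ α ∈ T ∩ Icc a x, ∃ β ∈ T ∩ Icc x b, Ioo α β ∩ T = ∅ := by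
  have hα := (hT.inter isClosed_Icc).csSup_mem ⟨a, ha, le_rfl, hx.1⟩ ⟨x, fun _ hy => hy.2.2⟩
  have hβ := (hT.inter isClosed_Icc).csInf_mem ⟨b, hb, hx.2, le_rfl⟩ ⟨x, fun _ hy => hy.2.1⟩
  refine ⟨_, hα, _, hβ, eq_empty_iff_forall_notMem.2 fun τ ⟨⟨hατ, hτβ⟩, hτ⟩ => ?_⟩
  rcases le_total τ x with hτx | hxτ
  · exact (le_csSup (s := T ∩ Icc a x) ⟨x, fun _ hy => hy.2.2⟩
      ⟨hτ, hα.2.1.trans hατ.le, hτx⟩).not_gt hατ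
  · exact (csInf_le (s := T ∩ Icc x b) ⟨x, fun _ hy => hy.2.1⟩
      ⟨hτ, hxτ, hτβ.le.trans hβ.2.2⟩).not_gt hτβ

namespace TSPartition

variable {T : Set ℝ} {a b : ℝ}

section Points

variable (P : TSPartition T a b) {g : ℝ → ℝ}

lemma strictMonoOn_t : StrictMonoOn P.t (Iic P.n) :=
  strictMonoOn_Iic_of_lt_succ P.mono

lemma t_le_t {i j : ℕ} (hij : i ≤ j) (hj : j ≤ P.n) : P.t i ≤ P.t j :=
  P.strictMonoOn_t.monotoneOn (hij.trans hj) hj hij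

lemma t_mem_Icc {j : ℕ} (hj : j ≤ P.n) : P.t j ∈ Icc a b :=
  ⟨P.first.symm.trans_le (P.t_le_t (Nat.zero_le j) hj), (P.t_le_t hj le_rfl).trans_eq P.last⟩

lemma Icc_t_subset {j : ℕ} (hj : j < P.n) : Icc (P.t j) (P.t (j + 1)) ⊆ Icc a b :=
  Icc_subset_Icc (P.t_mem_Icc hj.le).1 (P.t_mem_Icc hj).2

def points : Finset ℝ := (Finset.range (P.n + 1)).image P.t

lemma mem_points {x : ℝ} : x ∈ P.points ↔ ∃ j ≤ P.n, P.t j = x := by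
  simp [points]

lemma points_subset : ↑P.points ⊆ T ∩ Icc a b := by
  rintro _ hx
  obtain ⟨j, hj, rfl⟩ := P.mem_points.1 hx
  exact ⟨P.mem j hj, P.t_mem_Icc hj⟩

lemma notMem_Ioo_of_mem_points {x : ℝ} (hx : x ∈ P.points) {k : ℕ} (hk : k < P.n) :
    x ∉ Ioo (P.t k) (P.t (k + 1)) := by
  obtain ⟨i, hi, rfl⟩ := P.mem_points.1 hx
  rintro ⟨hki, hik⟩
  rcases le_or_gt i k with h | h
  · exact (P.t_le_t h hk.le).not_gt hki
  · exact (P.t_le_t h hi).not_gt hik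

lemma first_mem_points : a ∈ P.points :=
  P.mem_points.2 ⟨0, Nat.zero_le _, P.first⟩

lemma last_mem_points : b ∈ P.points :=
  P.mem_points.2 ⟨P.n, le_rfl, P.last⟩

lemma tsRho_t_succ_mem_Icc {j : ℕ} (hj : j < P.n) :
    tsRho T (P.t (j + 1)) ∈ Icc (P.t j) (P.t (j + 1)) :=
  tsRho_mem_Icc (P.mem j hj.le) (P.mono j hj)

lemma tsSigma_t_mem_Icc {j : ℕ} (hj : j < P.n) :
    tsSigma T (P.t j) ∈ Icc (P.t j) (P.t (j + 1)) :=
  tsSigma_mem_Icc (P.mem (j + 1) hj) (P.mono j hj)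

lemma increment_nonneg (hg : MonotoneOn g (Icc a b)) {j : ℕ}
    (hj : j < P.n) : 0 ≤ g (P.t (j + 1)) - g (P.t j) :=
  sub_nonneg.2 (hg (P.t_mem_Icc hj.le) (P.t_mem_Icc hj) (P.mono j hj).le)

def relax : TSPartition univ a b :=
  ⟨P.n, P.t, P.npos, fun _ _ => trivial, P.first, P.last, P.mono⟩

end Points

def two (ha : a ∈ T) (hb : b ∈ T) (hab : a < b) : TSPartition T a b where
  n := 1
  t i := if i = 0 then a else b
  npos := one_pos
  mem j _ := by split_ifs <;> assumption
  first := rfl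
  last := rfl
  mono j hj := by
    obtain rfl : j = 0 := by omega
    simpa using hab

section OfFinset

private lemma card_eq {s : Finset ℝ} (ha : a ∈ s) (hb : b ∈ s) (hab : a < b) :
    s.card = s.card - 1 + 1 := by
  have := Finset.one_lt_card.2 ⟨a, ha, b, hb, hab.ne⟩
  omega

variable (s : Finset ℝ) (hsT : ↑s ⊆ T ∩ Icc a b) (ha : a ∈ s) (hb : b ∈ s) (hab : a < b)

def ofFinset : TSPartition T a b where
  n := s.card - 1
  t i := s.orderEmbOfFin (card_eq ha hb hab) ⟨min i (s.card - 1), by omega⟩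
  npos := by have := Finset.one_lt_card.2 ⟨a, ha, b, hb, hab.ne⟩; omega
  mem _ _ := (hsT (s.orderEmbOfFin_mem _ _)).1
  first := by
    obtain ⟨i, hi⟩ := (Set.ext_iff.1 (s.range_orderEmbOfFin (card_eq ha hb hab)) _).2 ha
    refine le_antisymm ?_ (hsT (s.orderEmbOfFin_mem _ _)).2.1
    exact ((s.orderEmbOfFin _).monotone (Fin.mk_le_mk.2 (by omega))).trans_eq hi
  last := by
    obtain ⟨i, hi⟩ := (Set.ext_iff.1 (s.range_orderEmbOfFin (card_eq ha hb hab)) _).2 hb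
    refine le_antisymm (hsT (s.orderEmbOfFin_mem _ _)).2.2 ?_
    exact hi.symm.trans_le ((s.orderEmbOfFin _).monotone (Fin.mk_le_mk.2 (by have := i.2; omega)))
  mono j hj := (s.orderEmbOfFin _).strictMono (Fin.mk_lt_mk.2 (by omega))

@[simp]
lemma points_ofFinset : (ofFinset s hsT ha hb hab).points = s := by
  ext x
  rw [mem_points]
  constructor
  · rintro ⟨j, -, rfl⟩
    exact s.orderEmbOfFin_mem _ _
  · intro hx
    obtain ⟨i, rfl⟩ := (Set.ext_iff.1 (s.range_orderEmbOfFin (card_eq ha hb hab)) _).2 hx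
    exact ⟨i, Nat.lt_succ_iff.1 i.2, by simp [ofFinset, Nat.lt_succ_iff.1 i.2]⟩

end OfFinset

lemma exists_common_refinement (hab : a < b) (P Q : TSPartition T a b) :
    ∃ R : TSPartition T a b, P.points ⊆ R.points ∧ Q.points ⊆ R.points := by
  classical
  have hsub : ↑(P.points ∪ Q.points) ⊆ T ∩ Icc a b := by
    rw [Finset.coe_union]
    exact union_subset P.points_subset Q.points_subset
  refine ⟨ofFinset _ hsub (Finset.mem_union_left _ P.first_mem_points)
    (Finset.mem_union_left _ P.last_mem_points) hab, ?_, ?_⟩ <;>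
  simp

/-- Each point `x` of `s` is replaced by the nearest points of `T` on either side of it. -/
lemma exists_forall_notMem_Ioo_of_inter_nonempty (hT : IsClosed T) (ha : a ∈ T) (hb : b ∈ T)
    (hab : a < b) (s : Finset ℝ) (hs : ↑s ⊆ Icc a b) :
    ∃ P : TSPartition T a b, ∀ k < P.n, (Ioo (P.t k) (P.t (k + 1)) ∩ T).Nonempty →
      ∀ x ∈ s, x ∉ Ioo (P.t k) (P.t (k + 1)) := by
  classical
  choose! α hα β hβ hgap using fun x (hx : x ∈ s) => exists_gap_around hT ha hb (hs hx)
  let S : Finset ℝ := insert a (insert b (s.image α ∪ s.image β))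
  have hST : ↑S ⊆ T ∩ Icc a b := by
    intro y hy
    simp only [S, Finset.coe_insert, Finset.coe_union, Finset.coe_image, mem_insert_iff,
      mem_union, mem_image, Finset.mem_coe] at hy
    rcases hy with rfl | rfl | ⟨x, hx, rfl⟩ | ⟨x, hx, rfl⟩
    · exact ⟨ha, le_rfl, hab.le⟩
    · exact ⟨hb, hab.le, le_rfl⟩
    · exact ⟨(hα x hx).1, (hα x hx).2.1, (hα x hx).2.2.trans (hs hx).2⟩
    · exact ⟨(hβ x hx).1, (hs hx).1.trans (hβ x hx).2.1, (hβ x hx).2.2⟩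
  let P := ofFinset S hST (by simp [S]) (by simp [S]) hab
  refine ⟨P, fun k hk ⟨τ, ⟨hkτ, hτk⟩, hτ⟩ x hx hxk => ?_⟩
  have hαP : α x ∈ P.points := by
    simpa [P, S] using Or.inr (Or.inr (Or.inl ⟨x, hx, rfl⟩))
  have hβP : β x ∈ P.points := by
    simpa [P, S] using Or.inr (Or.inr (Or.inr ⟨x, hx, rfl⟩))
  have hαk : α x ≤ P.t k := not_lt.1 fun h =>
    P.notMem_Ioo_of_mem_points hαP hk ⟨h, (hα x hx).2.2.trans_lt hxk.2⟩
  have hkβ : P.t (k + 1) ≤ β x := not_lt.1 fun h =>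
    P.notMem_Ioo_of_mem_points hβP hk ⟨hxk.1.trans_le (hβ x hx).2.1, h⟩
  exact eq_empty_iff_forall_notMem.1 (hgap x hx) τ ⟨⟨hαk.trans_lt hkτ, hτk.trans_le hkβ⟩, hτ⟩

variable {T' : Set ℝ} {f g : ℝ → ℝ}

def stieltjesSum (P : TSPartition T a b) (w : ℝ → ℝ → ℝ) (g : ℝ → ℝ) : ℝ :=
  ∑ j ∈ Finset.range P.n, w (P.t j) (P.t (j + 1)) * (g (P.t (j + 1)) - g (P.t j))

lemma stieltjesSum_relax (P : TSPartition T a b) (w : ℝ → ℝ → ℝ) :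
    P.relax.stieltjesSum w g = P.stieltjesSum w g :=
  rfl

lemma stieltjesSum_sub (P : TSPartition T a b) (w w' : ℝ → ℝ → ℝ) :
    P.stieltjesSum w g - P.stieltjesSum w' g = P.stieltjesSum (fun u v => w u v - w' u v) g := by
  simp only [stieltjesSum, ← Finset.sum_sub_distrib, sub_mul]

lemma stieltjesSum_le_stieltjesSum (P : TSPartition T a b) (hg : MonotoneOn g (Icc a b))
    {w w' : ℝ → ℝ → ℝ} (h : ∀ j < P.n, w (P.t j) (P.t (j + 1)) ≤ w' (P.t j) (P.t (j + 1))) :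
    P.stieltjesSum w g ≤ P.stieltjesSum w' g :=
  Finset.sum_le_sum fun j hj => mul_le_mul_of_nonneg_right (h j (Finset.mem_range.1 hj))
    (P.increment_nonneg hg (Finset.mem_range.1 hj))

structure IsRefinementMap (P : TSPartition T a b) (R : TSPartition T' a b) (φ : ℕ → ℕ) :
    Prop where
  map_zero : φ 0 = 0
  map_n : φ P.n = R.n
  lt_succ : ∀ j < P.n, φ j < φ (j + 1)
  t_map : ∀ j ≤ P.n, R.t (φ j) = P.t j

lemma exists_isRefinementMap {P : TSPartition T a b} {R : TSPartition T' a b}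
    (h : P.points ⊆ R.points) : ∃ φ, P.IsRefinementMap R φ := by
  have hidx : ∀ j, ∃ i, j ≤ P.n → i ≤ R.n ∧ R.t i = P.t j := fun j => by
    by_cases hj : j ≤ P.n
    · obtain ⟨i, hi, hti⟩ := R.mem_points.1 (h (P.mem_points.2 ⟨j, hj, rfl⟩))
      exact ⟨i, fun _ => ⟨hi, hti⟩⟩
    · exact ⟨0, fun hj' => absurd hj' hj⟩
  choose φ hφ using hidx
  have hlt : ∀ {i j}, i ≤ P.n → j ≤ P.n → (φ i < φ j ↔ P.t i < P.t j) := fun hi hj => by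
    rw [← (hφ _ hi).2, ← (hφ _ hj).2]
    exact (R.strictMonoOn_t.lt_iff_lt (hφ _ hi).1 (hφ _ hj).1).symm
  refine ⟨φ, ?_, ?_, fun j hj => (hlt (Nat.le_of_lt hj) hj).2 (P.mono j hj),
    fun j hj => (hφ j hj).2⟩
  · refine Nat.eq_zero_of_not_pos fun hpos => ?_
    have := R.strictMonoOn_t (Nat.zero_le R.n) (hφ 0 (Nat.zero_le _)).1 hpos
    rw [(hφ 0 (Nat.zero_le _)).2, P.first, R.first] at this
    exact this.false
  · refine (hφ _ le_rfl).1.eq_of_not_lt fun hlt' => ?_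
    have := R.strictMonoOn_t (hφ P.n le_rfl).1 (Set.mem_Iic.2 le_rfl) hlt'
    rw [(hφ _ le_rfl).2, P.last, R.last] at this
    exact this.false

namespace IsRefinementMap

variable {P : TSPartition T a b} {R : TSPartition T' a b} {φ : ℕ → ℕ} {w w' : ℝ → ℝ → ℝ}

lemma le_n (hφ : P.IsRefinementMap R φ) {j : ℕ} (hj : j ≤ P.n) : φ j ≤ R.n :=
  hφ.map_n ▸ (strictMonoOn_Iic_of_lt_succ hφ.lt_succ).monotoneOn hj (Set.mem_Iic.2 le_rfl) hj

lemma sum_range_eq (hφ : P.IsRefinementMap R φ) (F : ℕ → ℝ) :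
    ∑ i ∈ Finset.range R.n, F i =
      ∑ k ∈ Finset.range P.n, ∑ i ∈ Finset.Ico (φ k) (φ (k + 1)), F i := by
  rw [← hφ.map_n]
  exact Finset.sum_range_eq_sum_Ico_blocks F hφ.map_zero fun k hk => (hφ.lt_succ k hk).le

lemma sum_Ico_sub (hφ : P.IsRefinementMap R φ) (g : ℝ → ℝ) {k : ℕ} (hk : k < P.n) :
    ∑ i ∈ Finset.Ico (φ k) (φ (k + 1)), (g (R.t (i + 1)) - g (R.t i)) =
      g (P.t (k + 1)) - g (P.t k) := by
  rw [Finset.sum_Ico_sub (fun i => g (R.t i)) (hφ.lt_succ k hk).le, hφ.t_map _ hk,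
    hφ.t_map _ hk.le]

lemma t_mem_Icc_of_mem_Ico (hφ : P.IsRefinementMap R φ) {k i : ℕ} (hk : k < P.n)
    (hi : i ∈ Finset.Ico (φ k) (φ (k + 1))) :
    i < R.n ∧ P.t k ≤ R.t i ∧ R.t (i + 1) ≤ P.t (k + 1) := by
  obtain ⟨hki, hik⟩ := Finset.mem_Ico.1 hi
  have hle := hφ.le_n (j := k + 1) hk
  refine ⟨by omega, ?_, ?_⟩
  · exact hφ.t_map k hk.le ▸ R.t_le_t hki (by omega)
  · exact hφ.t_map (k + 1) hk ▸ R.t_le_t hik hle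

lemma map_succ (hφ : P.IsRefinementMap R φ) {k : ℕ} (hk : k < P.n)
    (hR : ∀ x ∈ R.points, x ∉ Ioo (P.t k) (P.t (k + 1))) : φ (k + 1) = φ k + 1 := by
  refine (Nat.succ_le_of_lt (hφ.lt_succ k hk)).antisymm' (not_lt.1 fun hlt => ?_)
  have hle := hφ.le_n (j := k + 1) hk
  refine hR _ (R.mem_points.2 ⟨φ k + 1, by omega, rfl⟩) ⟨?_, ?_⟩
  · exact hφ.t_map k hk.le ▸ R.strictMonoOn_t (by omega : φ k ≤ R.n) (by omega : φ k + 1 ≤ R.n)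
      (Nat.lt_succ_self _)
  · exact hφ.t_map (k + 1) hk ▸ R.strictMonoOn_t (by omega : φ k + 1 ≤ R.n) hle hlt

lemma stieltjesSum_le (hφ : P.IsRefinementMap R φ) (hg : MonotoneOn g (Icc a b))
    (hw : ∀ k < P.n, ∀ i < R.n, P.t k ≤ R.t i → R.t (i + 1) ≤ P.t (k + 1) →
      w (R.t i) (R.t (i + 1)) ≤ w' (P.t k) (P.t (k + 1))) :
    R.stieltjesSum w g ≤ P.stieltjesSum w' g := by
  rw [stieltjesSum, hφ.sum_range_eq]
  refine Finset.sum_le_sum fun k hk => ?_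
  rw [Finset.mem_range] at hk
  calc _ ≤ ∑ i ∈ Finset.Ico (φ k) (φ (k + 1)),
          w' (P.t k) (P.t (k + 1)) * (g (R.t (i + 1)) - g (R.t i)) :=
        Finset.sum_le_sum fun i hi => by
          obtain ⟨hiR, hki, hik⟩ := hφ.t_mem_Icc_of_mem_Ico hk hi
          exact mul_le_mul_of_nonneg_right (hw k hk i hiR hki hik) (R.increment_nonneg hg hiR)
    _ = _ := by rw [← Finset.mul_sum, hφ.sum_Ico_sub g hk]

lemma le_stieltjesSum (hφ : P.IsRefinementMap R φ) (hg : MonotoneOn g (Icc a b))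
    (hw : ∀ k < P.n, ∀ i < R.n, P.t k ≤ R.t i → R.t (i + 1) ≤ P.t (k + 1) →
      w' (P.t k) (P.t (k + 1)) ≤ w (R.t i) (R.t (i + 1))) :
    P.stieltjesSum w' g ≤ R.stieltjesSum w g := by
  rw [stieltjesSum, stieltjesSum, hφ.sum_range_eq]
  refine Finset.sum_le_sum fun k hk => ?_
  rw [Finset.mem_range] at hk
  calc _ = ∑ i ∈ Finset.Ico (φ k) (φ (k + 1)),
          w' (P.t k) (P.t (k + 1)) * (g (R.t (i + 1)) - g (R.t i)) := by
        rw [← Finset.mul_sum, hφ.sum_Ico_sub g hk]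
    _ ≤ _ := Finset.sum_le_sum fun i hi => by
          obtain ⟨hiR, hki, hik⟩ := hφ.t_mem_Icc_of_mem_Ico hk hi
          exact mul_le_mul_of_nonneg_right (hw k hk i hiR hki hik) (R.increment_nonneg hg hiR)

/-- Intervals of `P` with no point of `T` inside carry no weight; the others are intervals of
`R` as well. -/
lemma stieltjesSum_le_of_forall_notMem_Ioo (hφ : P.IsRefinementMap R φ)
    (hf : MonotoneOn f (Icc a b)) (hg : MonotoneOn g (Icc a b))
    (hR : ∀ k < P.n, (Ioo (P.t k) (P.t (k + 1)) ∩ T).Nonempty →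
      ∀ x ∈ R.points, x ∉ Ioo (P.t k) (P.t (k + 1)))
    (hw₀ : ∀ k < P.n, Ioo (P.t k) (P.t (k + 1)) ∩ T = ∅ → w (P.t k) (P.t (k + 1)) = 0)
    (hw : ∀ k < P.n, w (P.t k) (P.t (k + 1)) ≤ f (P.t (k + 1)) - f (P.t k)) :
    P.stieltjesSum w g ≤ R.stieltjesSum (fun u v => f v - f u) g := by
  rw [stieltjesSum, stieltjesSum, hφ.sum_range_eq]
  refine Finset.sum_le_sum fun k hk => ?_
  rw [Finset.mem_range] at hk
  rcases (Ioo (P.t k) (P.t (k + 1)) ∩ T).eq_empty_or_nonempty with hgap | hne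
  · rw [hw₀ k hk hgap, zero_mul]
    refine Finset.sum_nonneg fun i hi => ?_
    obtain ⟨hiR, -, -⟩ := hφ.t_mem_Icc_of_mem_Ico hk hi
    exact mul_nonneg (R.increment_nonneg hf hiR) (R.increment_nonneg hg hiR)
  · have hsucc := hφ.map_succ hk (hR k hk hne)
    rw [hsucc, Nat.Ico_succ_singleton, Finset.sum_singleton, ← hsucc, hφ.t_map k hk.le,
      hφ.t_map (k + 1) hk]
    exact mul_le_mul_of_nonneg_right (hw k hk) (P.increment_nonneg hg hk)

end IsRefinementMap

end TSPartition

section DarbouxSums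

open TSPartition

variable {T : Set ℝ} {a b : ℝ} {f g : ℝ → ℝ}

lemma MonotoneOn.csSup_image_Icc_inter {s : Set ℝ} (hf : MonotoneOn f s) {c d : ℝ}
    (hcd : c ≤ d) (hd : d ∈ T) (hs : Icc c d ⊆ s) : sSup (f '' (Icc c d ∩ T)) = f d :=
  ((hf.mono (inter_subset_left.trans hs)).map_isGreatest
    ⟨⟨right_mem_Icc.2 hcd, hd⟩, fun _ hx => hx.1.2⟩).csSup_eq

lemma MonotoneOn.csInf_image_Icc_inter {s : Set ℝ} (hf : MonotoneOn f s) {c d : ℝ}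
    (hcd : c ≤ d) (hc : c ∈ T) (hs : Icc c d ⊆ s) : sInf (f '' (Icc c d ∩ T)) = f c :=
  ((hf.mono (inter_subset_left.trans hs)).map_isLeast
    ⟨⟨left_mem_Icc.2 hcd, hc⟩, fun _ hx => hx.1.1⟩).csInf_eq

lemma upperSumD_eq_stieltjesSum (hT : IsClosed T) (hf : MonotoneOn f (Icc a b))
    (P : TSPartition T a b) :
    upperSumD T f g P = P.stieltjesSum (fun _ v => f (tsRho T v)) g := by
  refine Finset.sum_congr rfl fun j hj => ?_
  have hj := Finset.mem_range.1 hj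
  have hρ := P.tsRho_t_succ_mem_Icc hj
  rw [hf.csSup_image_Icc_inter hρ.1 (tsRho_mem hT (P.mem j hj.le) (P.mono j hj))
    ((Icc_subset_Icc_right hρ.2).trans (P.Icc_t_subset hj))]

lemma lowerSumD_eq_stieltjesSum (hf : MonotoneOn f (Icc a b)) (P : TSPartition T a b) :
    lowerSumD T f g P = P.stieltjesSum (fun u _ => f u) g := by
  refine Finset.sum_congr rfl fun j hj => ?_
  have hj := Finset.mem_range.1 hj
  have hρ := P.tsRho_t_succ_mem_Icc hj
  rw [hf.csInf_image_Icc_inter hρ.1 (P.mem j hj.le)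
    ((Icc_subset_Icc_right hρ.2).trans (P.Icc_t_subset hj))]

lemma upperSumN_eq_stieltjesSum (hf : MonotoneOn f (Icc a b)) (P : TSPartition T a b) :
    upperSumN T f g P = P.stieltjesSum (fun _ v => f v) g := by
  refine Finset.sum_congr rfl fun j hj => ?_
  have hj := Finset.mem_range.1 hj
  have hσ := P.tsSigma_t_mem_Icc hj
  rw [hf.csSup_image_Icc_inter hσ.2 (P.mem (j + 1) hj)
    ((Icc_subset_Icc_left hσ.1).trans (P.Icc_t_subset hj))]

lemma lowerSumN_eq_stieltjesSum (hT : IsClosed T) (hf : MonotoneOn f (Icc a b))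
    (P : TSPartition T a b) :
    lowerSumN T f g P = P.stieltjesSum (fun u _ => f (tsSigma T u)) g := by
  refine Finset.sum_congr rfl fun j hj => ?_
  have hj := Finset.mem_range.1 hj
  have hσ := P.tsSigma_t_mem_Icc hj
  rw [hf.csInf_image_Icc_inter hσ.2 (tsSigma_mem hT (P.mem (j + 1) hj) (P.mono j hj))
    ((Icc_subset_Icc_left hσ.1).trans (P.Icc_t_subset hj))]

end DarbouxSums

section Refinement

open TSPartition

variable {T : Set ℝ} {a b : ℝ} {f g : ℝ → ℝ} {P R : TSPartition T a b}

lemma lowerSumD_le_lowerSumD_of_subset (hf : MonotoneOn f (Icc a b))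
    (hg : MonotoneOn g (Icc a b)) (h : P.points ⊆ R.points) :
    lowerSumD T f g P ≤ lowerSumD T f g R := by
  obtain ⟨φ, hφ⟩ := exists_isRefinementMap h
  rw [lowerSumD_eq_stieltjesSum hf, lowerSumD_eq_stieltjesSum hf]
  exact hφ.le_stieltjesSum hg fun k hk i hi hki _ =>
    hf (P.t_mem_Icc hk.le) (R.t_mem_Icc hi.le) hki

lemma upperSumD_le_upperSumD_of_subset (hT : IsClosed T) (hf : MonotoneOn f (Icc a b))
    (hg : MonotoneOn g (Icc a b)) (h : P.points ⊆ R.points) :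
    upperSumD T f g R ≤ upperSumD T f g P := by
  obtain ⟨φ, hφ⟩ := exists_isRefinementMap h
  rw [upperSumD_eq_stieltjesSum hT hf, upperSumD_eq_stieltjesSum hT hf]
  exact hφ.stieltjesSum_le hg fun k hk i hi _ hik =>
    hf (R.Icc_t_subset hi (R.tsRho_t_succ_mem_Icc hi))
      (P.Icc_t_subset hk (P.tsRho_t_succ_mem_Icc hk)) (tsRho_mono (R.mem i hi.le) (R.mono i hi) hik)

lemma lowerSumN_le_lowerSumN_of_subset (hT : IsClosed T) (hf : MonotoneOn f (Icc a b))
    (hg : MonotoneOn g (Icc a b)) (h : P.points ⊆ R.points) :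
    lowerSumN T f g P ≤ lowerSumN T f g R := by
  obtain ⟨φ, hφ⟩ := exists_isRefinementMap h
  rw [lowerSumN_eq_stieltjesSum hT hf, lowerSumN_eq_stieltjesSum hT hf]
  exact hφ.le_stieltjesSum hg fun k hk i hi hki _ =>
    hf (P.Icc_t_subset hk (P.tsSigma_t_mem_Icc hk)) (R.Icc_t_subset hi (R.tsSigma_t_mem_Icc hi))
      (tsSigma_mono (R.mem (i + 1) hi) (R.mono i hi) hki)

lemma upperSumN_le_upperSumN_of_subset (hf : MonotoneOn f (Icc a b))
    (hg : MonotoneOn g (Icc a b)) (h : P.points ⊆ R.points) :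
    upperSumN T f g R ≤ upperSumN T f g P := by
  obtain ⟨φ, hφ⟩ := exists_isRefinementMap h
  rw [upperSumN_eq_stieltjesSum hf, upperSumN_eq_stieltjesSum hf]
  exact hφ.stieltjesSum_le hg fun k hk i hi _ hik => hf (R.t_mem_Icc hi) (P.t_mem_Icc hk) hik

lemma lowerSumD_le_upperSumD (hT : IsClosed T) (hab : a < b) (hf : MonotoneOn f (Icc a b))
    (hg : MonotoneOn g (Icc a b)) (P P' : TSPartition T a b) :
    lowerSumD T f g P ≤ upperSumD T f g P' := by
  obtain ⟨R, hPR, hP'R⟩ := exists_common_refinement hab P P'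
  calc lowerSumD T f g P ≤ lowerSumD T f g R := lowerSumD_le_lowerSumD_of_subset hf hg hPR
    _ ≤ upperSumD T f g R := by
      rw [lowerSumD_eq_stieltjesSum hf, upperSumD_eq_stieltjesSum hT hf]
      exact R.stieltjesSum_le_stieltjesSum hg fun j hj => hf (R.t_mem_Icc hj.le)
        (R.Icc_t_subset hj (R.tsRho_t_succ_mem_Icc hj)) (R.tsRho_t_succ_mem_Icc hj).1
    _ ≤ upperSumD T f g P' := upperSumD_le_upperSumD_of_subset hT hf hg hP'R

lemma lowerSumN_le_upperSumN (hT : IsClosed T) (hab : a < b) (hf : MonotoneOn f (Icc a b))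
    (hg : MonotoneOn g (Icc a b)) (P P' : TSPartition T a b) :
    lowerSumN T f g P ≤ upperSumN T f g P' := by
  obtain ⟨R, hPR, hP'R⟩ := exists_common_refinement hab P P'
  calc lowerSumN T f g P ≤ lowerSumN T f g R := lowerSumN_le_lowerSumN_of_subset hT hf hg hPR
    _ ≤ upperSumN T f g R := by
      rw [lowerSumN_eq_stieltjesSum hT hf, upperSumN_eq_stieltjesSum hf]
      exact R.stieltjesSum_le_stieltjesSum hg fun j hj =>
        hf (R.Icc_t_subset hj (R.tsSigma_t_mem_Icc hj)) (R.t_mem_Icc hj)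
          (R.tsSigma_t_mem_Icc hj).2
    _ ≤ upperSumN T f g P' := upperSumN_le_upperSumN_of_subset hf hg hP'R

end Refinement

section Integrability

open TSPartition

variable {T : Set ℝ} {a b : ℝ} {f g : ℝ → ℝ}

lemma rsDeltaIntegrable_of_forall_exists_sub_le (hT : IsClosed T) (ha : a ∈ T) (hb : b ∈ T)
    (hab : a < b) (hf : MonotoneOn f (Icc a b)) (hg : MonotoneOn g (Icc a b))
    (h : ∀ ε > 0, ∃ P : TSPartition T a b, upperSumD T f g P - lowerSumD T f g P ≤ ε) :
    RSDeltaIntegrable T a b f g :=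
  haveI : Nonempty (TSPartition T a b) := ⟨two ha hb hab⟩
  csSup_range_eq_csInf_range_of_forall_sub_le (lowerSumD_le_upperSumD hT hab hf hg) h

lemma rsNablaIntegrable_of_forall_exists_sub_le (hT : IsClosed T) (ha : a ∈ T) (hb : b ∈ T)
    (hab : a < b) (hf : MonotoneOn f (Icc a b)) (hg : MonotoneOn g (Icc a b))
    (h : ∀ ε > 0, ∃ P : TSPartition T a b, upperSumN T f g P - lowerSumN T f g P ≤ ε) :
    RSNablaIntegrable T a b f g :=
  haveI : Nonempty (TSPartition T a b) := ⟨two ha hb hab⟩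
  csSup_range_eq_csInf_range_of_forall_sub_le (lowerSumN_le_upperSumN hT hab hf hg) h

lemma RSDeltaIntegrable.exists_sub_lt (hT : IsClosed T) (ha : a ∈ T) (hb : b ∈ T)
    (hab : a < b) (hf : MonotoneOn f (Icc a b)) (hg : MonotoneOn g (Icc a b))
    (h : RSDeltaIntegrable T a b f g) {ε : ℝ} (hε : 0 < ε) :
    ∃ P : TSPartition T a b, upperSumD T f g P - lowerSumD T f g P < ε :=
  haveI : Nonempty (TSPartition T a b) := ⟨two ha hb hab⟩
  exists_sub_lt_of_csSup_range_eq_csInf_range (fun P Q =>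
    (exists_common_refinement hab P Q).imp fun _ hR =>
      ⟨lowerSumD_le_lowerSumD_of_subset hf hg hR.1, upperSumD_le_upperSumD_of_subset hT hf hg hR.2⟩)
    h hε

lemma lowerIntD_le_lowerIntD_univ (ha : a ∈ T) (hb : b ∈ T) (hab : a < b)
    (hf : MonotoneOn f (Icc a b)) (hg : MonotoneOn g (Icc a b)) :
    lowerIntD T a b f g ≤ lowerIntD univ a b f g := by
  refine csSup_le ⟨_, mem_range_self (two ha hb hab)⟩ (forall_mem_range.2 fun P => ?_)
  have hP : lowerSumD T f g P = lowerSumD univ f g P.relax := by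
    rw [lowerSumD_eq_stieltjesSum hf, lowerSumD_eq_stieltjesSum hf, stieltjesSum_relax]
  exact hP ▸ le_csSup ⟨_, forall_mem_range.2 fun Q =>
    lowerSumD_le_upperSumD isClosed_univ hab hf hg Q (two trivial trivial hab)⟩ (mem_range_self _)

lemma upperIntD_univ_le_upperIntN (ha : a ∈ T) (hb : b ∈ T) (hab : a < b)
    (hf : MonotoneOn f (Icc a b)) (hg : MonotoneOn g (Icc a b)) :
    upperIntD univ a b f g ≤ upperIntN T a b f g := by
  refine le_csInf ⟨_, mem_range_self (two ha hb hab)⟩ (forall_mem_range.2 fun P => ?_)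
  have hP : upperSumN T f g P = upperSumD univ f g P.relax := by
    rw [upperSumN_eq_stieltjesSum hf, upperSumD_eq_stieltjesSum isClosed_univ hf,
      stieltjesSum_relax]
    simp only [tsRho_univ]
  exact hP ▸ csInf_le ⟨_, forall_mem_range.2 fun Q =>
    lowerSumD_le_upperSumD isClosed_univ hab hf hg (two trivial trivial hab) Q⟩ (mem_range_self _)

end Integrability

section Transfer

open TSPartition

variable {T : Set ℝ} {a b : ℝ} {f g : ℝ → ℝ}

lemma upperSumD_univ_sub_lowerSumD_univ (hf : MonotoneOn f (Icc a b))
    (Q : TSPartition univ a b) :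
    upperSumD univ f g Q - lowerSumD univ f g Q = Q.stieltjesSum (fun u v => f v - f u) g := by
  rw [upperSumD_eq_stieltjesSum isClosed_univ hf, lowerSumD_eq_stieltjesSum hf, stieltjesSum_sub]
  simp only [tsRho_univ]

lemma exists_sub_le_upperSumD_univ_sub_lowerSumD_univ (hT : IsClosed T) (ha : a ∈ T)
    (hb : b ∈ T) (hab : a < b) (hf : MonotoneOn f (Icc a b)) (hg : MonotoneOn g (Icc a b))
    (Q : TSPartition univ a b) :
    ∃ P : TSPartition T a b,
      upperSumD T f g P - lowerSumD T f g P ≤ upperSumD univ f g Q - lowerSumD univ f g Q ∧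
      upperSumN T f g P - lowerSumN T f g P ≤ upperSumD univ f g Q - lowerSumD univ f g Q := by
  classical
  obtain ⟨P, hP⟩ := exists_forall_notMem_Ioo_of_inter_nonempty hT ha hb hab Q.points
    fun x hx => (Q.points_subset hx).2
  have hsub : ↑(P.points ∪ Q.points) ⊆ univ ∩ Icc a b := by
    rw [Finset.coe_union, univ_inter]
    exact union_subset (fun x hx => (P.points_subset hx).2) fun x hx => (Q.points_subset hx).2
  let R : TSPartition univ a b := ofFinset _ hsub
    (Finset.mem_union_left _ P.first_mem_points) (Finset.mem_union_left _ P.last_mem_points) hab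
  obtain ⟨φ, hφ⟩ := exists_isRefinementMap (P := P) (R := R) (by simp [R])
  have hR : ∀ k < P.n, (Ioo (P.t k) (P.t (k + 1)) ∩ T).Nonempty →
      ∀ x ∈ R.points, x ∉ Ioo (P.t k) (P.t (k + 1)) := by
    intro k hk hne x hx
    rw [points_ofFinset, Finset.mem_union] at hx
    exact hx.elim (fun hx => P.notMem_Ioo_of_mem_points hx hk) (hP k hk hne x)
  have hQR : Q.points ⊆ R.points := by simp [R]
  have hRQ : R.stieltjesSum (fun u v => f v - f u) g ≤
      upperSumD univ f g Q - lowerSumD univ f g Q := by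
    rw [← upperSumD_univ_sub_lowerSumD_univ hf]
    linarith [upperSumD_le_upperSumD_of_subset isClosed_univ hf hg hQR,
      lowerSumD_le_lowerSumD_of_subset (f := f) (g := g) hf hg hQR]
  refine ⟨P, le_trans ?_ hRQ, le_trans ?_ hRQ⟩
  · rw [upperSumD_eq_stieltjesSum hT hf, lowerSumD_eq_stieltjesSum hf, stieltjesSum_sub]
    refine hφ.stieltjesSum_le_of_forall_notMem_Ioo hf hg hR (fun k hk hgap => ?_) fun k hk =>
      sub_le_sub_right (hf (P.Icc_t_subset hk (P.tsRho_t_succ_mem_Icc hk)) (P.t_mem_Icc hk)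
        (P.tsRho_t_succ_mem_Icc hk).2) _
    simp only [tsRho_eq_of_gap (P.mem k hk.le) (P.mono k hk) hgap, sub_self]
  · rw [upperSumN_eq_stieltjesSum hf, lowerSumN_eq_stieltjesSum hT hf, stieltjesSum_sub]
    refine hφ.stieltjesSum_le_of_forall_notMem_Ioo hf hg hR (fun k hk hgap => ?_) fun k hk =>
      sub_le_sub_left (hf (P.t_mem_Icc hk.le) (P.Icc_t_subset hk (P.tsSigma_t_mem_Icc hk))
        (P.tsSigma_t_mem_Icc hk).1) _
    simp only [tsSigma_eq_of_gap (P.mem (k + 1) hk) (P.mono k hk) hgap, sub_self]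

end Transfer

/-- The classical Riemann–Stieltjes integral is the Darboux–Stieltjes integral over the time
scale `Set.univ`. -/
theorem statement8_general (T : Set ℝ) (hT : IsClosed T)
    (a b : ℝ) (ha : a ∈ T) (hb : b ∈ T) (hab : a < b) (f g : ℝ → ℝ)
    (hg : StrictMonoOn g (Set.Icc a b))
    (hf : StrictMonoOn f (Set.Icc a b))
    (hclass : RSDeltaIntegrable Set.univ a b f g) :
    RSDeltaIntegrable T a b f g ∧ RSNablaIntegrable T a b f g ∧
    RSDeltaIntegral T a b f g ≤ RSDeltaIntegral Set.univ a b f g ∧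
    RSDeltaIntegral Set.univ a b f g ≤ RSNablaIntegral T a b f g := by
  replace hf := hf.monotoneOn
  replace hg := hg.monotoneOn
  have hsmall : ∀ ε > 0, ∃ P : TSPartition T a b,
      upperSumD T f g P - lowerSumD T f g P ≤ ε ∧ upperSumN T f g P - lowerSumN T f g P ≤ ε := by
    intro ε hε
    obtain ⟨Q, hQ⟩ := hclass.exists_sub_lt isClosed_univ trivial trivial hab hf hg hε
    obtain ⟨P, hD, hN⟩ :=
      exists_sub_le_upperSumD_univ_sub_lowerSumD_univ hT ha hb hab hf hg Q
    exact ⟨P, hD.trans hQ.le, hN.trans hQ.le⟩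
  have hD : RSDeltaIntegrable T a b f g := rsDeltaIntegrable_of_forall_exists_sub_le hT ha hb
    hab hf hg fun ε hε => (hsmall ε hε).imp fun _ => And.left
  refine ⟨hD, rsNablaIntegrable_of_forall_exists_sub_le hT ha hb hab hf hg fun ε hε =>
    (hsmall ε hε).imp fun _ => And.right, ?_, upperIntD_univ_le_upperIntN ha hb hab hf hg⟩
  calc RSDeltaIntegral T a b f g = lowerIntD T a b f g := hD.symm
    _ ≤ lowerIntD univ a b f g := lowerIntD_le_lowerIntD_univ ha hb hab hf hg
    _ = RSDeltaIntegral univ a b f g := hclass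

/-- Comparison of the delta and nabla Riemann–Stieltjes integrals of the restrictions
with the classical Riemann–Stieltjes integral (here realized as the Darboux–Stieltjes
integral over the time scale `Set.univ`), for strictly increasing `f`. -/
theorem statement8 (T : Set ℝ) (hT : IsClosed T) (hTne : T.Nonempty)
    (a b : ℝ) (ha : a ∈ T) (hb : b ∈ T) (hab : a < b) (f g : ℝ → ℝ)
    (hg : StrictMonoOn g (Set.Icc a b))
    (hf : StrictMonoOn f (Set.Icc a b))
    (hclass : RSDeltaIntegrable Set.univ a b f g) :
    RSDeltaIntegrable T a b f g ∧ RSNablaIntegrable T a b f g ∧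
    RSDeltaIntegral T a b f g ≤ RSDeltaIntegral Set.univ a b f g ∧
    RSDeltaIntegral Set.univ a b f g ≤ RSNablaIntegral T a b f g :=
  statement8_general T hT a b ha hb hab f g hg hf hclass
end
end

section
/- (Additivity over subintervals) Let a, b, c ∈ 𝕋 with a < b < c. If f is bounded on [a,c] ∩ 𝕋 and g is increasing on [a,c] ∩ 𝕋, and f is Riemann–Stieltjes delta integrable with respect to g on [a,b]∩𝕋 and on [b,c]∩𝕋, then f is integrable on [a,c]∩𝕋 and ∫ₐᶜ f Δg = ∫ₐᵇ f Δg + ∫_b^c f Δg. -/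
/-!
A partition `Q` of `[a,c]` splits at `b` into the partitions of `[a,b]` and `[b,c]` with nodes
`min tⱼ b` and `max tⱼ b`. This replaces at most one cell `[u, ρ(v)]`, the one with `u < b < v`,
by `[u, ρ(b)]` and `[b, ρ(v)]`, both contained in `[u, ρ(v)]`, so for increasing `g` the upper
sum does not grow; conversely, concatenating partitions of `[a,b]` and `[b,c]` adds their upper
sums. Hence the upper integral is additive, for every bounded `f`. The lower integral of `f` is
minus the upper integral of `-f`, so it is additive as well, and integrability on both pieces
gives integrability on `[a,c]`.
-/

open Set Filter

noncomputable section

lemma le_tsRho {T : Set ℝ} {s t : ℝ} (hs : s ∈ T) (hst : s < t) : s ≤ tsRho T t :=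
  le_csSup ⟨t, fun _ hx => hx.2.le⟩ ⟨hs, hst⟩

lemma tsRho_le {T : Set ℝ} {s t : ℝ} (hs : s ∈ T) (hst : s < t) : tsRho T t ≤ t :=
  csSup_le ⟨s, hs, hst⟩ fun _ hx => hx.2.le

lemma tsRho_mono_s17 {T : Set ℝ} {s t u : ℝ} (hs : s ∈ T) (hst : s < t) (htu : t ≤ u) :
    tsRho T t ≤ tsRho T u :=
  csSup_le_csSup ⟨u, fun _ hx => hx.2.le⟩ ⟨s, hs, hst⟩ fun _ hx => ⟨hx.1, hx.2.trans_le htu⟩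

lemma add_min_max_le {α : Type*} [LinearOrder α] {F : α → α → ℝ} {u v b : α}
    (huv : u ≤ v) (hbb : F b b = 0) (hF : u < b → b < v → F u b + F b v ≤ F u v) :
    F (min u b) (min v b) + F (max u b) (max v b) ≤ F u v := by
  rcases le_or_gt v b with hvb | hbv
  · rw [min_eq_left (huv.trans hvb), min_eq_left hvb, max_eq_right (huv.trans hvb),
      max_eq_right hvb, hbb, add_zero]
  rcases le_or_gt b u with hbu | hub
  · rw [min_eq_right hbu, min_eq_right (hbu.trans huv), max_eq_left hbu,
      max_eq_left (hbu.trans huv), hbb, zero_add]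
  · rw [min_eq_left hub.le, min_eq_right hbv.le, max_eq_right hub.le, max_eq_left hbv.le]
    exact hF hub hbv

def deltaCell (T : Set ℝ) (u v : ℝ) : Set ℝ := Icc u (tsRho T v) ∩ T

def upperTermD (T : Set ℝ) (f g : ℝ → ℝ) (u v : ℝ) : ℝ :=
  sSup (f '' deltaCell T u v) * (g v - g u)

section Cells

variable {T : Set ℝ} {f g : ℝ → ℝ} {u m v C : ℝ}

lemma left_mem_deltaCell (hu : u ∈ T) (huv : u < v) : u ∈ deltaCell T u v :=
  ⟨⟨le_rfl, le_tsRho hu huv⟩, hu⟩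

lemma deltaCell_subset (hu : u ∈ T) (huv : u < v) : deltaCell T u v ⊆ Icc u v ∩ T :=
  fun _ hs => ⟨⟨hs.1.1, hs.1.2.trans (tsRho_le hu huv)⟩, hs.2⟩

lemma upperTermD_add_le (hu : u ∈ T) (hm : m ∈ T) (hv : v ∈ T) (hum : u < m) (hmv : m < v)
    (hf : BddAbove (f '' (Icc u v ∩ T))) (hg : MonotoneOn g (Icc u v ∩ T)) :
    upperTermD T f g u m + upperTermD T f g m v ≤ upperTermD T f g u v := by
  have huv := hum.trans hmv
  have hbdd : BddAbove (f '' deltaCell T u v) :=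
    hf.mono (image_mono (deltaCell_subset hu huv))
  have hleft : sSup (f '' deltaCell T u m) ≤ sSup (f '' deltaCell T u v) :=
    csSup_le_csSup hbdd ⟨_, mem_image_of_mem f (left_mem_deltaCell hu hum)⟩ <| image_mono <|
      inter_subset_inter_left _ (Icc_subset_Icc le_rfl (tsRho_mono_s17 hu hum hmv.le))
  have hright : sSup (f '' deltaCell T m v) ≤ sSup (f '' deltaCell T u v) :=
    csSup_le_csSup hbdd ⟨_, mem_image_of_mem f (left_mem_deltaCell hm hmv)⟩ <| image_mono <|
      inter_subset_inter_left _ (Icc_subset_Icc hum.le le_rfl)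
  have hu' : u ∈ Icc u v ∩ T := ⟨left_mem_Icc.2 huv.le, hu⟩
  have hm' : m ∈ Icc u v ∩ T := ⟨⟨hum.le, hmv.le⟩, hm⟩
  have hv' : v ∈ Icc u v ∩ T := ⟨right_mem_Icc.2 huv.le, hv⟩
  calc upperTermD T f g u m + upperTermD T f g m v
      ≤ sSup (f '' deltaCell T u v) * (g m - g u) + sSup (f '' deltaCell T u v) * (g v - g m) :=
        add_le_add (mul_le_mul_of_nonneg_right hleft (sub_nonneg.2 (hg hu' hm' hum.le)))
          (mul_le_mul_of_nonneg_right hright (sub_nonneg.2 (hg hm' hv' hmv.le)))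
    _ = upperTermD T f g u v := by unfold upperTermD; ring

lemma neg_mul_sub_le_upperTermD (hu : u ∈ T) (hv : v ∈ T) (huv : u < v)
    (hf : ∀ t ∈ Icc u v ∩ T, |f t| ≤ C) (hg : MonotoneOn g (Icc u v ∩ T)) :
    -C * (g v - g u) ≤ upperTermD T f g u v := by
  have hbdd : BddAbove (f '' deltaCell T u v) := ⟨C, by
    rintro _ ⟨t, ht, rfl⟩
    exact (abs_le.1 (hf t (deltaCell_subset hu huv ht))).2⟩
  have hfu : -C ≤ sSup (f '' deltaCell T u v) :=
    (abs_le.1 (hf u ⟨left_mem_Icc.2 huv.le, hu⟩)).1.trans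
      (le_csSup hbdd (mem_image_of_mem f (left_mem_deltaCell hu huv)))
  exact mul_le_mul_of_nonneg_right hfu
    (sub_nonneg.2 (hg ⟨left_mem_Icc.2 huv.le, hu⟩ ⟨right_mem_Icc.2 huv.le, hv⟩ huv.le))

end Cells

namespace TSPartition

variable {T : Set ℝ} {a b c : ℝ}

def sum (P : TSPartition T a b) (F : ℝ → ℝ → ℝ) : ℝ :=
  ∑ j ∈ Finset.range P.n, F (P.t j) (P.t (j + 1))

lemma upperSumD_eq_sum (f g : ℝ → ℝ) (P : TSPartition T a b) :
    upperSumD T f g P = P.sum (upperTermD T f g) :=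
  rfl

lemma monotoneOn (P : TSPartition T a b) : MonotoneOn P.t (Iic P.n) :=
  (strictMonoOn_Iic_of_lt_succ fun j hj => by simpa using P.mono j hj).monotoneOn

lemma mem_Icc (P : TSPartition T a b) {j : ℕ} (hj : j ≤ P.n) : P.t j ∈ Icc a b := by
  constructor
  · simpa [P.first] using P.monotoneOn (mem_Iic.2 (Nat.zero_le _)) hj (Nat.zero_le j)
  · simpa [P.last] using P.monotoneOn hj (mem_Iic.2 le_rfl) hj

def single (ha : a ∈ T) (hb : b ∈ T) (hab : a < b) : TSPartition T a b where
  n := 1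
  t j := if j = 0 then a else b
  npos := one_pos
  mem j _ := by split_ifs <;> assumption
  first := if_pos rfl
  last := if_neg one_ne_zero
  mono j hj := by simpa [Nat.lt_one_iff.1 hj] using hab

section Append

variable (P : TSPartition T a b) (Q : TSPartition T b c)

def append : TSPartition T a c where
  n := P.n + Q.n
  t j := if j ≤ P.n then P.t j else Q.t (j - P.n)
  npos := Nat.add_pos_left P.npos _
  mem j hj := by
    split_ifs with h
    exacts [P.mem j h, Q.mem _ (by omega)]
  first := by simp [P.first]
  last := by simp [Nat.ne_of_gt Q.npos, Q.last]
  mono j hj := by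
    rcases lt_or_ge j P.n with h | h
    · rw [if_pos h.le, if_pos (show j + 1 ≤ P.n from h)]
      exact P.mono j h
    · obtain ⟨i, rfl⟩ := Nat.exists_eq_add_of_le h
      have hi : i < Q.n := by omega
      rw [if_neg (by omega : ¬P.n + i + 1 ≤ P.n), show P.n + i + 1 - P.n = i + 1 by omega]
      split_ifs with h0
      · obtain rfl : i = 0 := by omega
        simpa [P.last, ← Q.first] using Q.mono 0 hi
      · simpa using Q.mono i hi

lemma append_t_left {j : ℕ} (hj : j ≤ P.n) : (P.append Q).t j = P.t j := if_pos hj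

lemma append_t_right (j : ℕ) : (P.append Q).t (P.n + j) = Q.t j := by
  rcases Nat.eq_zero_or_pos j with rfl | hj
  · rw [Nat.add_zero, append_t_left P Q le_rfl, P.last, Q.first]
  · simp only [append, if_neg (by omega : ¬P.n + j ≤ P.n), Nat.add_sub_cancel_left]

lemma sum_append (F : ℝ → ℝ → ℝ) : (P.append Q).sum F = P.sum F + Q.sum F := by
  unfold sum
  rw [show (P.append Q).n = P.n + Q.n from rfl, Finset.sum_range_add]
  congr 1 <;> refine Finset.sum_congr rfl fun j hj => ?_
  · rw [Finset.mem_range] at hj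
    rw [append_t_left P Q hj.le, append_t_left P Q hj]
  · exact congrArg₂ F (append_t_right P Q j) (append_t_right P Q (j + 1))

end Append

section Restrict

variable (Q : TSPartition T a c) {F : ℝ → ℝ → ℝ}

def restrictLeft (hb : b ∈ T) (hab : a < b) {k : ℕ} (hk : k ≤ Q.n) (hlt : ∀ j < k, Q.t j < b)
    (hle : b ≤ Q.t k) : TSPartition T a b where
  n := k
  t j := min (Q.t j) b
  npos := Nat.pos_of_ne_zero fun h => by
    subst h
    rw [Q.first] at hle
    exact hle.not_gt hab
  mem j hj := by
    rcases min_choice (Q.t j) b with h | h <;> rw [h]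
    exacts [Q.mem j (hj.trans hk), hb]
  first := by rw [Q.first, min_eq_left hab.le]
  last := min_eq_right hle
  mono j hj := by
    rw [min_eq_left (hlt j hj).le]
    exact lt_min (Q.mono j (hj.trans_le hk)) (hlt j hj)

def restrictRight (hb : b ∈ T) (hbc : b < c) {m : ℕ} (hm : m ≤ Q.n) (hle : Q.t m ≤ b)
    (hgt : ∀ j, m < j → j ≤ Q.n → b < Q.t j) : TSPartition T b c where
  n := Q.n - m
  t j := max (Q.t (m + j)) b
  npos := Nat.sub_pos_of_lt <| hm.lt_of_ne fun h => by
    subst h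
    rw [Q.last] at hle
    exact hle.not_gt hbc
  mem j hj := by
    rcases max_choice (Q.t (m + j)) b with h | h <;> rw [h]
    exacts [Q.mem _ (by omega), hb]
  first := max_eq_right hle
  last := by rw [Nat.add_sub_cancel' hm, Q.last, max_eq_left hbc.le]
  mono j hj := by
    have hb' := hgt (m + j + 1) (by omega) (by omega)
    rw [show m + (j + 1) = m + j + 1 from rfl, max_eq_left hb'.le]
    exact max_lt (Q.mono _ (by omega)) hb'

lemma sum_restrictLeft (hb : b ∈ T) (hbb : F b b = 0) (hab : a < b) {k : ℕ} (hk : k ≤ Q.n)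
    (hlt : ∀ j < k, Q.t j < b) (hle : b ≤ Q.t k) :
    (Q.restrictLeft hb hab hk hlt hle).sum F =
      ∑ j ∈ Finset.range Q.n, F (min (Q.t j) b) (min (Q.t (j + 1)) b) := by
  rw [← Finset.sum_range_add_sum_Ico _ hk, Finset.sum_eq_zero (s := Finset.Ico k Q.n), add_zero]
  · rfl
  intro j hj
  rw [Finset.mem_Ico] at hj
  have hbj : b ≤ Q.t j := hle.trans (Q.monotoneOn hk hj.2.le hj.1)
  have hbj' : b ≤ Q.t (j + 1) := hbj.trans (Q.mono j hj.2).le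
  rw [min_eq_right hbj, min_eq_right hbj', hbb]

lemma sum_restrictRight (hb : b ∈ T) (hbb : F b b = 0) (hbc : b < c) {m : ℕ} (hm : m ≤ Q.n)
    (hle : Q.t m ≤ b) (hgt : ∀ j, m < j → j ≤ Q.n → b < Q.t j) :
    (Q.restrictRight hb hbc hm hle hgt).sum F =
      ∑ j ∈ Finset.range Q.n, F (max (Q.t j) b) (max (Q.t (j + 1)) b) := by
  have hsplit := Finset.sum_range_add (fun j => F (max (Q.t j) b) (max (Q.t (j + 1)) b))
    m (Q.n - m)
  rw [Nat.add_sub_cancel' hm] at hsplit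
  rw [hsplit, Finset.sum_eq_zero (s := Finset.range m), zero_add]
  · rfl
  intro j hj
  rw [Finset.mem_range] at hj
  have hjb : Q.t j ≤ b := (Q.monotoneOn (hj.le.trans hm) hm hj.le).trans hle
  have hjb' : Q.t (j + 1) ≤ b :=
    (Q.monotoneOn (Nat.succ_le_of_lt (hj.trans_le hm)) hm hj).trans hle
  rw [max_eq_right hjb, max_eq_right hjb', hbb]

lemma exists_sum_add_sum_le (hb : b ∈ T) (hab : a < b) (hbc : b < c) {F : ℝ → ℝ → ℝ}
    (hbb : F b b = 0)
    (hF : ∀ u ∈ Icc a c ∩ T, ∀ v ∈ Icc a c ∩ T, u < b → b < v → F u b + F b v ≤ F u v) :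
    ∃ (P₁ : TSPartition T a b) (P₂ : TSPartition T b c), P₁.sum F + P₂.sum F ≤ Q.sum F := by
  classical
  have hbn : b ≤ Q.t Q.n := by rw [Q.last]; exact hbc.le
  have hex : ∃ k, b ≤ Q.t k := ⟨Q.n, hbn⟩
  have hk : Nat.find hex ≤ Q.n := Nat.find_min' hex hbn
  have hlt : ∀ j < Nat.find hex, Q.t j < b := fun j hj => not_le.1 (Nat.find_min hex hj)
  set m := Nat.findGreatest (fun j => Q.t j ≤ b) Q.n
  have hm : m ≤ Q.n := Nat.findGreatest_le Q.n
  have hle : Q.t m ≤ b :=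
    Nat.findGreatest_spec (P := fun j => Q.t j ≤ b) (Nat.zero_le _) (by rw [Q.first]; exact hab.le)
  have hgt : ∀ j, m < j → j ≤ Q.n → b < Q.t j := fun j hmj hj =>
    not_le.1 (Nat.findGreatest_is_greatest hmj hj)
  refine ⟨Q.restrictLeft hb hab hk hlt (Nat.find_spec hex),
    Q.restrictRight hb hbc hm hle hgt, ?_⟩
  rw [sum_restrictLeft _ _ hbb, sum_restrictRight _ _ hbb, ← Finset.sum_add_distrib]
  refine Finset.sum_le_sum fun j hj => ?_
  rw [Finset.mem_range] at hj
  have hmem : ∀ i ≤ Q.n, Q.t i ∈ Icc a c ∩ T := fun i hi => ⟨Q.mem_Icc hi, Q.mem i hi⟩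
  exact add_min_max_le (Q.mono j hj).le hbb (hF _ (hmem j hj.le) _ (hmem (j + 1) hj))

end Restrict

end TSPartition

section Integrals

variable {T : Set ℝ} {a b c C : ℝ} {f g : ℝ → ℝ}

lemma bddBelow_range_upperSumD (hf : ∀ t ∈ Icc a b ∩ T, |f t| ≤ C)
    (hg : MonotoneOn g (Icc a b ∩ T)) :
    BddBelow (range fun P : TSPartition T a b => upperSumD T f g P) := by
  refine ⟨-C * (g b - g a), ?_⟩
  rintro _ ⟨P, rfl⟩
  have hsub : ∀ j < P.n, Icc (P.t j) (P.t (j + 1)) ∩ T ⊆ Icc a b ∩ T := fun j hj =>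
    inter_subset_inter_left _ (Icc_subset_Icc (P.mem_Icc hj.le).1 (P.mem_Icc hj).2)
  calc -C * (g b - g a) = ∑ j ∈ Finset.range P.n, -C * (g (P.t (j + 1)) - g (P.t j)) := by
        rw [← Finset.mul_sum, Finset.sum_range_sub (fun j => g (P.t j)), P.first, P.last]
    _ ≤ upperSumD T f g P := Finset.sum_le_sum fun j hj => by
        rw [Finset.mem_range] at hj
        exact neg_mul_sub_le_upperTermD (P.mem j hj.le) (P.mem (j + 1) hj) (P.mono j hj)
          (fun t ht => hf t (hsub j hj ht)) (hg.mono (hsub j hj))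

theorem upperIntD_add (ha : a ∈ T) (hb : b ∈ T) (hc : c ∈ T) (hab : a < b) (hbc : b < c)
    (hf : ∀ t ∈ Icc a c ∩ T, |f t| ≤ C) (hg : MonotoneOn g (Icc a c ∩ T)) :
    upperIntD T a c f g = upperIntD T a b f g + upperIntD T b c f g := by
  have : Nonempty (TSPartition T a b) := ⟨.single ha hb hab⟩
  have : Nonempty (TSPartition T b c) := ⟨.single hb hc hbc⟩
  have : Nonempty (TSPartition T a c) := ⟨.single ha hc (hab.trans hbc)⟩
  have hab_sub : Icc a b ∩ T ⊆ Icc a c ∩ T :=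
    inter_subset_inter_left _ (Icc_subset_Icc_right hbc.le)
  have hbc_sub : Icc b c ∩ T ⊆ Icc a c ∩ T :=
    inter_subset_inter_left _ (Icc_subset_Icc_left hab.le)
  have hbdd_ab := bddBelow_range_upperSumD (fun t ht => hf t (hab_sub ht)) (hg.mono hab_sub)
  have hbdd_bc := bddBelow_range_upperSumD (fun t ht => hf t (hbc_sub ht)) (hg.mono hbc_sub)
  have hbdd_ac := bddBelow_range_upperSumD hf hg
  refine le_antisymm (le_ciInf_add_ciInf fun P₁ P₂ => ?_) (le_ciInf fun Q => ?_)
  · calc upperIntD T a c f g ≤ upperSumD T f g (P₁.append P₂) := ciInf_le hbdd_ac _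
      _ = upperSumD T f g P₁ + upperSumD T f g P₂ := by
        simp only [TSPartition.upperSumD_eq_sum, TSPartition.sum_append]
  · have hsuperadd : ∀ u ∈ Icc a c ∩ T, ∀ v ∈ Icc a c ∩ T, u < b → b < v →
        upperTermD T f g u b + upperTermD T f g b v ≤ upperTermD T f g u v := by
      intro u hu v hv hub hbv
      have hsub : Icc u v ∩ T ⊆ Icc a c ∩ T :=
        inter_subset_inter_left _ (Icc_subset_Icc hu.1.1 hv.1.2)
      exact upperTermD_add_le hu.2 hb hv.2 hub hbv
        ⟨C, by rintro _ ⟨t, ht, rfl⟩; exact (abs_le.1 (hf t (hsub ht))).2⟩ (hg.mono hsub)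
    obtain ⟨P₁, P₂, hle⟩ := Q.exists_sum_add_sum_le hb hab hbc (by simp [upperTermD]) hsuperadd
    exact (add_le_add (ciInf_le hbdd_ab P₁) (ciInf_le hbdd_bc P₂)).trans hle

lemma lowerSumD_eq_neg_upperSumD_neg (P : TSPartition T a b) :
    lowerSumD T f g P = -upperSumD T (-f) g P := by
  rw [upperSumD, ← Finset.sum_neg_distrib]
  refine Finset.sum_congr rfl fun j _ => ?_
  have hneg : ∀ S : Set ℝ, (-f) '' S = -(f '' S) := fun S => by
    rw [← image_neg_eq_neg, image_image]
    rfl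
  rw [hneg, Real.sSup_neg]
  ring

lemma lowerIntD_eq_neg_upperIntD_neg : lowerIntD T a b f g = -upperIntD T a b (-f) g := by
  rw [lowerIntD, upperIntD, ← Real.sSup_neg]
  simp_rw [lowerSumD_eq_neg_upperSumD_neg]
  congr 1
  ext x
  simp [neg_eq_iff_eq_neg]

end Integrals

theorem statement17_general (T : Set ℝ) (a b c : ℝ)
    (ha : a ∈ T) (hb : b ∈ T) (hc : c ∈ T) (hab : a < b) (hbc : b < c)
    (f g : ℝ → ℝ) (C : ℝ)
    (hf : ∀ t ∈ Set.Icc a c ∩ T, |f t| ≤ C)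
    (hg : MonotoneOn g (Set.Icc a c ∩ T))
    (h₁ : RSDeltaIntegrable T a b f g) (h₂ : RSDeltaIntegrable T b c f g) :
    RSDeltaIntegrable T a c f g ∧
    RSDeltaIntegral T a c f g = RSDeltaIntegral T a b f g + RSDeltaIntegral T b c f g := by
  have hf_neg : ∀ t ∈ Icc a c ∩ T, |(-f) t| ≤ C := by simpa only [Pi.neg_apply, abs_neg]
  have hupper := upperIntD_add ha hb hc hab hbc hf hg
  have hlower : lowerIntD T a c f g = lowerIntD T a b f g + lowerIntD T b c f g := by
    simp only [lowerIntD_eq_neg_upperIntD_neg, upperIntD_add ha hb hc hab hbc hf_neg hg]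
    ring
  unfold RSDeltaIntegrable at h₁ h₂ ⊢
  exact ⟨by rw [hlower, hupper, h₁, h₂], hupper⟩

/-- Additivity of the Riemann–Stieltjes delta integral over subintervals. -/
theorem statement17 (T : Set ℝ) (hT : IsClosed T) (a b c : ℝ)
    (ha : a ∈ T) (hb : b ∈ T) (hc : c ∈ T) (hab : a < b) (hbc : b < c)
    (f g : ℝ → ℝ) (C : ℝ)
    (hf : ∀ t ∈ Set.Icc a c ∩ T, |f t| ≤ C)
    (hg : MonotoneOn g (Set.Icc a c ∩ T))
    (h₁ : RSDeltaIntegrable T a b f g) (h₂ : RSDeltaIntegrable T b c f g) :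
    RSDeltaIntegrable T a c f g ∧
    RSDeltaIntegral T a c f g = RSDeltaIntegral T a b f g + RSDeltaIntegral T b c f g :=
  statement17_general T a b c ha hb hc hab hbc f g C hf hg h₁ h₂
end
end
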